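/- Let R be a root system with a ℤ/m-grading (R_j)_{j∈ℤ/m}. For y, y' ∈ Y with (y,α) ≠ 1 ≠ (y',α) for all α ∈ R_1, write y ≈ y' if ((y,α)−1)((y',α)−1) > 0 for every α ∈ R_1, and let c be a (nonempty) ≈-equivalence class. Let R_{0,c} = {α ∈ R_0 : s_α(c) = c} and W_{0,c} the subgroup of the Weyl group generated by {s_α : α ∈ R_{0,c}}. Let Y″ = Y − ∪_{N∈ℤ∖{0}, α∈R_{N mod m}} { y : (y,α) = N }. Then there exists y_c ∈ c ∩ Y″ with w(y_c) = y_c for all w ∈ W_{0,c}; in particular (y_c,α) = 0 for all α ∈ R_{0,c}. -/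

import Mathlib

open scoped Classical

noncomputable section

/-- A root system: finite-dimensional `ℚ`-vector spaces `Y`, `X` with a perfect
pairing, a finite set of roots `R ⊆ X` with coroots `α ↦ α∨ ∈ Y`, satisfying the
usual axioms (in particular `R = -R` and the reflections preserve `R`). -/
structure RootSystemQ (Y : Type*) (X : Type*) [AddCommGroup Y] [Module ℚ Y]
    [AddCommGroup X] [Module ℚ X] where
  pair : Y →ₗ[ℚ] X →ₗ[ℚ] ℚ
  R : Finset X
  coroot : X → Y
  finY : FiniteDimensional ℚ Y
  finX : FiniteDimensional ℚ X
  nondeg_left : ∀ y : Y, (∀ x : X, pair y x = 0) → y = 0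
  nondeg_right : ∀ x : X, (∀ y : Y, pair y x = 0) → x = 0
  root_ne_zero : ∀ α ∈ R, α ≠ (0 : X)
  neg_mem : ∀ α ∈ R, -α ∈ R
  coroot_neg : ∀ α ∈ R, coroot (-α) = -coroot α
  pair_coroot_self : ∀ α ∈ R, pair (coroot α) α = 2
  reflect_mem : ∀ α ∈ R, ∀ β ∈ R, β - pair (coroot α) β • α ∈ R

/-- A `ℤ/m`-grading of a root system, encoded by a grading function
`grade : X → ZMod m`; the graded piece `R_j` is `{α ∈ R | grade α = j}`.
The axioms say: if `α + α' ∈ R` then `α + α'` has grade `j + j'`, and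
`-α` has grade `-j` (i.e. `α + α' = 0` forces `j + j' = 0`). -/
structure ZModGrading {Y X : Type*} [AddCommGroup Y] [Module ℚ Y]
    [AddCommGroup X] [Module ℚ X] (m : ℕ) (P : RootSystemQ Y X) where
  grade : X → ZMod m
  grade_add : ∀ α ∈ P.R, ∀ β ∈ P.R, α + β ∈ P.R → grade (α + β) = grade α + grade β
  grade_neg : ∀ α ∈ P.R, grade (-α) = -grade α

variable {Y X : Type*} [AddCommGroup Y] [Module ℚ Y] [AddCommGroup X] [Module ℚ X]

/-- The coarse (`≈`-) equivalence class of `y₀`: all `y` with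
`((y,α)−1)((y₀,α)−1) > 0` for every `α ∈ R₁`. -/
def classOf (m : ℕ) (P : RootSystemQ Y X) (G : ZModGrading m P) (y₀ : Y) : Set Y :=
  {y | ∀ α ∈ P.R, G.grade α = 1 → 0 < (P.pair y α - 1) * (P.pair y₀ α - 1)}

/-- The subgroup `W_{0,c}` of the Weyl group (acting on `Y`) generated by the
reflections `s_α`, `α ∈ R₀`, which keep the class `c = classOf y₀` stable. -/
def W0cY (m : ℕ) (P : RootSystemQ Y X) (G : ZModGrading m P) (y₀ : Y) :
    Subgroup (Y ≃ₗ[ℚ] Y) :=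
  Subgroup.closure {u | ∃ α ∈ P.R, G.grade α = 0 ∧
    ((fun y : Y => y - P.pair y α • P.coroot α) '' classOf m P G y₀ = classOf m P G y₀) ∧
    ∀ y : Y, u y = y - P.pair y α • P.coroot α}

/-!
Fix `y₀ ∈ c`. Each element `g` of the group generated by the reflections `s_α`,
`α ∈ R_{0,c}`, acting on the roots, is realised by a point of `c` whose pairings are those of
`y₀` twisted by `g`, because each such `s_α` maps `c` onto itself. The class `c` is convex, so
the average of these points lies in `c`; its pairing with `α` vanishes because `s_α α = -α`.
The averaged point `y` may still lie on a hyperplane `(y, α) = N`, `N ≠ 0`; the point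
`(1 + 1/q) y` with `q` a large integer lies on none of them (as `q` and `q + 1` are coprime),
stays in `c`, and keeps the vanishing pairings.
-/

namespace RootSystemQ

variable (P : RootSystemQ Y X)

def coreflection (α : X) (y : Y) : Y := y - P.pair y α • P.coroot α

def reflRoot {α : X} (hα : α ∈ P.R) (β : P.R) : P.R :=
  ⟨β - P.pair (P.coroot α) β • α, P.reflect_mem α hα β β.2⟩

lemma reflRoot_involutive {α : X} (hα : α ∈ P.R) : Function.Involutive (P.reflRoot hα) := by
  intro β
  ext
  simp only [reflRoot, map_sub, map_smul, smul_eq_mul, P.pair_coroot_self α hα]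
  module

def reflPerm {α : X} (hα : α ∈ P.R) : Equiv.Perm P.R :=
  (P.reflRoot_involutive hα).toPerm

lemma reflPerm_inv {α : X} (hα : α ∈ P.R) : (P.reflPerm hα)⁻¹ = P.reflPerm hα :=
  Function.Involutive.toPerm_symm _

def negPerm : Equiv.Perm P.R :=
  Function.Involutive.toPerm (fun β : P.R => ⟨-β, P.neg_mem β β.2⟩) fun β => by simp

lemma reflPerm_self {α : X} (hα : α ∈ P.R) : P.reflPerm hα ⟨α, hα⟩ = P.negPerm ⟨α, hα⟩ := by
  ext
  change α - P.pair (P.coroot α) α • α = -α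
  rw [P.pair_coroot_self α hα]
  module

lemma commute_reflPerm_negPerm {α : X} (hα : α ∈ P.R) : Commute (P.reflPerm hα) P.negPerm := by
  ext β
  change -(β : X) - P.pair (P.coroot α) (-β) • α = -((β : X) - P.pair (P.coroot α) β • α)
  rw [map_neg]
  module

lemma pair_coreflection (α : X) (y : Y) (β : X) :
    P.pair (P.coreflection α y) β = P.pair y (β - P.pair (P.coroot α) β • α) := by
  simp only [coreflection, map_sub, map_smul, LinearMap.sub_apply, LinearMap.smul_apply,
    smul_eq_mul]
  ring

variable {P} {S : Set X} (hS : S ⊆ P.R)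

/-- Acting on the finite set of roots rather than on `Y` makes this group finite. -/
def reflSubgroup : Subgroup (Equiv.Perm P.R) :=
  Subgroup.closure (Set.range fun α : S => P.reflPerm (hS α.2))

lemma reflSubgroup_le_centralizer : reflSubgroup hS ≤ Subgroup.centralizer {P.negPerm} :=
  Subgroup.closure_le _ |>.mpr <| Set.range_subset_iff.mpr fun α =>
    Subgroup.mem_centralizer_singleton_iff.mpr (P.commute_reflPerm_negPerm (hS α.2)).eq

lemma exists_mem_pair_eq_pair_apply {c : Set Y}
    (hSc : ∀ α ∈ S, Set.MapsTo (P.coreflection α) c c) {g : Equiv.Perm P.R}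
    (hg : g ∈ reflSubgroup hS) : ∀ y ∈ c, ∃ y' ∈ c, ∀ β : P.R, P.pair y' β = P.pair y (g β) := by
  have hrefl : ∀ α : S, ∀ y ∈ c, ∃ y' ∈ c, ∀ β : P.R,
      P.pair y' β = P.pair y (P.reflPerm (hS α.2) β) := fun α y hy =>
    ⟨P.coreflection α y, hSc α α.2 hy, fun β => P.pair_coreflection α y β⟩
  induction hg using Subgroup.closure_induction'' with
  | mem _ hg => obtain ⟨α, rfl⟩ := hg; exact hrefl α
  | inv_mem _ hg => obtain ⟨α, rfl⟩ := hg; rw [reflPerm_inv]; exact hrefl α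
  | one => exact fun y hy => ⟨y, hy, fun β => rfl⟩
  | mul g h _ _ ihg ihh =>
    intro y hy
    obtain ⟨y₁, hy₁, hg₁⟩ := ihg y hy
    obtain ⟨y₂, hy₂, hh₂⟩ := ihh y₁ hy₁
    exact ⟨y₂, hy₂, fun β => (hh₂ β).trans (hg₁ (h β))⟩

lemma sum_pair_apply_eq_zero {α : X} (hα : α ∈ S) (y : Y) :
    ∑ g : reflSubgroup hS, P.pair y ((g : Equiv.Perm P.R) ⟨α, hS hα⟩) = 0 := by
  set σ : reflSubgroup hS := ⟨P.reflPerm (hS hα), Subgroup.subset_closure ⟨⟨α, hα⟩, rfl⟩⟩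
  set F : reflSubgroup hS → ℚ := fun g => P.pair y ((g : Equiv.Perm P.R) ⟨α, hS hα⟩)
  have hFσ : ∀ g, F (g * σ) = -F g := by
    intro g
    have hcomm := Subgroup.mem_centralizer_singleton_iff.mp (reflSubgroup_le_centralizer hS g.2)
    change P.pair y ((g : Equiv.Perm P.R) (P.reflPerm (hS hα) ⟨α, hS hα⟩)) = _
    rw [reflPerm_self, ← Equiv.Perm.mul_apply, hcomm]
    exact map_neg _ _
  have : ∑ g, F g = -∑ g, F g := by
    rw [← Finset.sum_neg_distrib]
    exact Fintype.sum_equiv (Equiv.mulRight σ) _ _ fun g => by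
      rw [Equiv.coe_mulRight, hFσ, neg_neg]
  linarith

theorem exists_mem_forall_pair_eq_zero (hS : S ⊆ P.R) {c : Set Y} (hc : Convex ℚ c)
    (hne : c.Nonempty) (hSc : ∀ α ∈ S, Set.MapsTo (P.coreflection α) c c) :
    ∃ y ∈ c, ∀ α ∈ S, P.pair y α = 0 := by
  obtain ⟨y₀, hy₀⟩ := hne
  choose f hfc hf using fun g : reflSubgroup hS => exists_mem_pair_eq_pair_apply hS hSc g.2 y₀ hy₀
  set n : ℚ := (Fintype.card (reflSubgroup hS) : ℚ)
  have hn : n ≠ 0 := by simp [n]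
  refine ⟨∑ g, n⁻¹ • f g, hc.sum_mem (fun _ _ => by positivity) ?_ fun g _ => hfc g, ?_⟩
  · simp [n, hn]
  · intro α hα
    simp only [map_sum, map_smul, LinearMap.sum_apply, LinearMap.smul_apply,
      smul_eq_mul, ← Finset.mul_sum]
    rw [Finset.sum_congr rfl fun g _ => hf g ⟨α, hS hα⟩, sum_pair_apply_eq_zero hS hα, mul_zero]

end RootSystemQ

lemma one_add_inv_mul_lt_one {q : ℕ} {b : ℚ} (hb : b < 1) (hq : b / (1 - b) < q) :
    (1 + (q : ℚ)⁻¹) * b < 1 := by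
  rcases le_or_gt b 0 with hb0 | hb0
  · nlinarith [inv_nonneg.mpr (Nat.cast_nonneg (α := ℚ) q)]
  · have hq0 : (0 : ℚ) < q := lt_trans (div_pos hb0 (by linarith)) hq
    have hbq : b < q * (1 - b) := (div_lt_iff₀ (by linarith)).mp hq
    have : b * (q : ℚ)⁻¹ < 1 - b := by rw [← div_eq_mul_inv, div_lt_iff₀ hq0]; linarith
    linarith

lemma one_add_inv_mul_ne_intCast {q : ℕ} {b : ℚ} (hq : |b.num| < q) {N : ℤ} (hN : N ≠ 0) :
    (1 + (q : ℚ)⁻¹) * b ≠ N := by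
  intro h
  have hq0 : (q : ℚ) ≠ 0 := by
    have : (0 : ℤ) < q := (abs_nonneg b.num).trans_lt hq
    exact_mod_cast this.ne'
  have hb : b ≠ 0 := by rintro rfl; simp [eq_comm, hN] at h
  have hℚ : ((q + 1 : ℤ) : ℚ) * b.num = ((q * (N * b.den) : ℤ) : ℚ) := by
    rw [← Rat.mul_den_eq_num]
    push_cast
    rw [← h]
    field_simp
  have hdvd : (q : ℤ) ∣ (q + 1) * b.num := ⟨N * b.den, by exact_mod_cast hℚ⟩
  have hcop : IsCoprime (q : ℤ) (q + 1) := ⟨-1, 1, by ring⟩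
  have := Int.le_of_dvd (abs_pos.mpr (Rat.num_ne_zero.mpr hb))
    ((dvd_abs _ _).mpr (hcop.dvd_of_dvd_mul_left hdvd))
  omega

lemma exists_one_lt_forall_mul {ι : Type*} (B : Finset ι) (b : ι → ℚ) :
    ∃ s : ℚ, 1 < s ∧ ∀ i ∈ B, (b i < 1 → s * b i < 1) ∧ ∀ N : ℤ, N ≠ 0 → s * b i ≠ N := by
  obtain ⟨q, hq⟩ := exists_nat_gt (∑ i ∈ B, (|((b i).num : ℚ)| + |b i / (1 - b i)|))
  have hle : ∀ i ∈ B, |((b i).num : ℚ)| + |b i / (1 - b i)| < q := fun i hi =>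
    (Finset.single_le_sum (f := fun i => |((b i).num : ℚ)| + |b i / (1 - b i)|)
      (fun _ _ => by positivity) hi).trans_lt hq
  have hq0 : (0 : ℚ) < q := lt_of_le_of_lt (Finset.sum_nonneg fun _ _ => by positivity) hq
  refine ⟨1 + (q : ℚ)⁻¹, by simpa using hq0, fun i hi => ⟨fun hb1 => ?_, fun N hN => ?_⟩⟩
  · refine one_add_inv_mul_lt_one hb1 ?_
    linarith [le_abs_self (b i / (1 - b i)), abs_nonneg ((b i).num : ℚ), hle i hi]
  · refine one_add_inv_mul_ne_intCast ?_ hN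
    have : |((b i).num : ℚ)| < q := by linarith [abs_nonneg (b i / (1 - b i)), hle i hi]
    exact_mod_cast this

section ClassOf

variable {m : ℕ} {P : RootSystemQ Y X} {G : ZModGrading m P} {y₀ : Y}

lemma mem_classOf_self (hy₀ : ∀ α ∈ P.R, G.grade α = 1 → P.pair y₀ α ≠ 1) :
    y₀ ∈ classOf m P G y₀ :=
  fun α hα h1 => mul_self_pos.mpr (sub_ne_zero.mpr (hy₀ α hα h1))

lemma convex_classOf : Convex ℚ (classOf m P G y₀) := by
  intro y hy z hz a b ha hb hab α hα h1
  have hy := hy α hα h1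
  have hz := hz α hα h1
  have hpair : P.pair (a • y + b • z) α - 1 = a * (P.pair y α - 1) + b * (P.pair z α - 1) := by
    simp only [map_add, map_smul, LinearMap.add_apply, LinearMap.smul_apply, smul_eq_mul]
    linear_combination hab
  rw [hpair, add_mul, mul_assoc, mul_assoc]
  obtain ha' | hb' : 0 < a ∨ 0 < b := by by_contra! h; linarith
  · exact add_pos_of_pos_of_nonneg (mul_pos ha' hy) (mul_nonneg hb hz.le)
  · exact add_pos_of_nonneg_of_pos (mul_nonneg ha hy.le) (mul_pos hb' hz)

lemma smul_mem_classOf {y : Y} (hy : y ∈ classOf m P G y₀) {s : ℚ} (hs : 1 ≤ s)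
    (hlt : ∀ α ∈ P.R, P.pair y α < 1 → s * P.pair y α < 1) : s • y ∈ classOf m P G y₀ := by
  intro α hα h1
  have hy := hy α hα h1
  rw [map_smul, LinearMap.smul_apply, smul_eq_mul]
  rcases lt_or_ge (P.pair y α) 1 with hlt1 | hge1
  · nlinarith [hlt α hα hlt1]
  · have hgt : 1 < P.pair y α := hge1.lt_of_ne fun h => by simp [← h] at hy
    have ht : 0 < P.pair y₀ α - 1 := pos_of_mul_pos_right hy (by linarith)
    exact mul_pos (by nlinarith) ht

lemma apply_eq_self_of_mem_W0cY {y : Y}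
    (hy : ∀ α ∈ P.R, G.grade α = 0 →
      P.coreflection α '' classOf m P G y₀ = classOf m P G y₀ → P.pair y α = 0)
    {u : Y ≃ₗ[ℚ] Y} (hu : u ∈ W0cY m P G y₀) : u y = y := by
  suffices W0cY m P G y₀ ≤ MulAction.stabilizer (Y ≃ₗ[ℚ] Y) y from this hu
  refine Subgroup.closure_le _ |>.mpr ?_
  rintro v ⟨α, hα, h0, hc, hv⟩
  change v y = y
  rw [hv, hy α hα h0 hc, zero_smul, sub_zero]

end ClassOf

theorem statement18_general (m : ℕ) (P : RootSystemQ Y X) (G : ZModGrading m P)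
    (y₀ : Y) (hy₀ : ∀ α ∈ P.R, G.grade α = 1 → P.pair y₀ α ≠ 1) :
    ∃ yc : Y,
      yc ∈ classOf m P G y₀ ∧
      (∀ α ∈ P.R, ∀ N : ℤ, N ≠ 0 → (N : ZMod m) = G.grade α → P.pair yc α ≠ (N : ℚ)) ∧
      (∀ u ∈ W0cY m P G y₀, u yc = yc) ∧
      (∀ α ∈ P.R, G.grade α = 0 →
        ((fun y : Y => y - P.pair y α • P.coroot α) '' classOf m P G y₀ = classOf m P G y₀) →
        P.pair yc α = 0) := by
  set c := classOf m P G y₀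
  obtain ⟨y, hyc, hy⟩ := RootSystemQ.exists_mem_forall_pair_eq_zero
    (S := {α | α ∈ P.R ∧ G.grade α = 0 ∧ P.coreflection α '' c = c}) (fun α hα => hα.1)
    convex_classOf ⟨y₀, mem_classOf_self hy₀⟩ fun α hα =>
      (Set.mapsTo_image _ c).mono_right hα.2.2.subset
  obtain ⟨s, hs1, hs⟩ := exists_one_lt_forall_mul P.R (P.pair y)
  have hzero : ∀ α ∈ P.R, G.grade α = 0 → P.coreflection α '' c = c → P.pair (s • y) α = 0 :=
    fun α hα h0 hc => by simp [hy α ⟨hα, h0, hc⟩]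
  refine ⟨s • y, smul_mem_classOf hyc hs1.le fun α hα => (hs α hα).1, ?_,
    fun u hu => apply_eq_self_of_mem_W0cY hzero hu, hzero⟩
  intro α hα N hN _
  simpa using (hs α hα).2 N hN

/-- cf. A.2 of the paper: every coarse equivalence class `c`
contains a point `y_c ∈ Y″` fixed by `W_{0,c}`; in particular `(y_c,α) = 0` for
every `α ∈ R_{0,c}`. -/
theorem statement18 (m : ℕ) (hm : 0 < m) (P : RootSystemQ Y X) (G : ZModGrading m P)
    (y₀ : Y) (hy₀ : ∀ α ∈ P.R, G.grade α = 1 → P.pair y₀ α ≠ 1) :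
    ∃ yc : Y,
      yc ∈ classOf m P G y₀ ∧
      (∀ α ∈ P.R, ∀ N : ℤ, N ≠ 0 → (N : ZMod m) = G.grade α → P.pair yc α ≠ (N : ℚ)) ∧
      (∀ u ∈ W0cY m P G y₀, u yc = yc) ∧
      (∀ α ∈ P.R, G.grade α = 0 →
        ((fun y : Y => y - P.pair y α • P.coroot α) '' classOf m P G y₀ = classOf m P G y₀) →
        P.pair yc α = 0) :=
  statement18_general m P G y₀ hy₀
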